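/- arXiv:1412.4023 — 3 statements merged into one kernel-verified Lean document; each statement's English description precedes it below -/
import Mathlib

section
/- Let (M, μ) be a measure space with μ a finite measure. For i = 1, 2 let ρ_i : M×𝕋 → [0,∞) and v_i : M×𝕋 → ℝ be bounded measurable functions, and define the measures g_i on 𝕋×ℝ by ∫φ dg_i = ∫_M ∫_𝕋 ρ_i^θ(x) φ(x, v_i^θ(x)) dx dμ(θ) (where ρ_i^θ := ρ_i(θ,·), v_i^θ := v_i(θ,·)). Assume equal total masses: ∫_M ∫_𝕋 ρ_1^θ(x) dx dμ(θ) = ∫_M ∫_𝕋 ρ_2^θ(x) dx dμ(θ) < ∞. Then W₁(g₁, g₂) ≤ (sup_{θ∈M} ‖ρ_1^θ‖_{L^∞(𝕋)}) · ∫_M ‖v_1^θ − v_2^θ‖_{L^∞(𝕋)} dμ(θ) + (1/2 + sup_{θ∈M} ‖v_2^θ‖_{L^∞(𝕋)}) · ∫_M ‖ρ_1^θ − ρ_2^θ‖_{L^∞(𝕋)} dμ(θ). -/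
/-!
Fix a 1-Lipschitz test function `φ` and put `c = φ (0, 0)`. Since the two densities have the same
total mass, `∫ φ dg₁ - ∫ φ dg₂` splits as
`∫∫ ρ₁ (φ(x, v₁) - φ(x, v₂)) + ∫∫ (ρ₁ - ρ₂) (φ(x, v₂) - c)`.
The first integrand is at most `‖ρ₁‖_∞ |v₁ - v₂|`; in the second, `|φ(x, v₂) - c|` is bounded by the
distance from `(x, v₂)` to `(0, 0)`, which is at most `1/2 + |v₂|` because `𝕋` has diameter `1/2`.
-/

open MeasureTheory Real Filter Topology

noncomputable section

abbrev 𝕋 := AddCircle (1 : ℝ)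

/-- The 1-Wasserstein (Kantorovich–Rubinstein) distance via the dual formulation. -/
noncomputable def W1 (μ ν : Measure (𝕋 × ℝ)) : ℝ :=
  sSup {r : ℝ | ∃ φ : 𝕋 × ℝ → ℝ, LipschitzWith 1 φ ∧
    r = (∫ p, φ p ∂μ) - ∫ p, φ p ∂ν}

/-- The measure on 𝕋 × ℝ acting on test functions by
φ ↦ ∫_M ∫_𝕋 ρ(θ,x) φ(x, v(θ,x)) dx dμ(θ). -/
noncomputable def fiberedMeasure {M : Type*} [MeasurableSpace M] (μ : Measure M)
    (ρ v : M → 𝕋 → ℝ) : Measure (𝕋 × ℝ) :=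
  ((μ.prod (volume : Measure 𝕋)).withDensity
      (fun q => ENNReal.ofReal (ρ q.1 q.2))).map (fun q => (q.2, v q.1 q.2))

lemma le_ciSup_of_forall_le {ι : Sort*} {f : ι → ℝ} {B : ℝ} (hB : ∀ i, f i ≤ B) (i : ι) :
    f i ≤ ⨆ i, f i :=
  le_ciSup ⟨B, Set.forall_mem_range.2 hB⟩ i

lemma le_ciSup_ciSup_of_forall_le {ι κ : Sort*} [Nonempty κ] {f : ι → κ → ℝ} {B : ℝ}
    (hB : ∀ i k, f i k ≤ B) (i : ι) (k : κ) : f i k ≤ ⨆ i, ⨆ k, f i k :=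
  (le_ciSup_of_forall_le (hB i) k).trans (le_ciSup_of_forall_le (fun i => ciSup_le (hB i)) i)

lemma abs_mul_le_mul_of_abs_le {a b A S : ℝ} (ha : |a| ≤ A) (hb : |b| ≤ S) :
    |a * b| ≤ A * S :=
  abs_mul a b ▸ mul_le_mul ha hb (abs_nonneg _) ((abs_nonneg _).trans ha)

instance : IsProbabilityMeasure (volume : Measure 𝕋) :=
  ⟨by simp [AddCircle.measure_univ]⟩

namespace LipschitzWith

variable {φ : 𝕋 × ℝ → ℝ}

lemma abs_sub_le_dist (hφ : LipschitzWith 1 φ) (p q : 𝕋 × ℝ) : |φ p - φ q| ≤ dist p q := by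
  simpa [Real.dist_eq] using hφ.dist_le_mul p q

lemma abs_sub_apply_mk_le (hφ : LipschitzWith 1 φ) (x : 𝕋) (a b : ℝ) :
    |φ (x, a) - φ (x, b)| ≤ |a - b| := by
  simpa [Prod.dist_eq, Real.dist_eq] using hφ.abs_sub_le_dist (x, a) (x, b)

lemma abs_sub_apply_zero_le (hφ : LipschitzWith 1 φ) (x : 𝕋) (r : ℝ) :
    |φ (x, r) - φ 0| ≤ 1 / 2 + |r| := by
  have hx : ‖x‖ ≤ 1 / 2 := by simpa using AddCircle.norm_le_half_period 1 one_ne_zero (x := x)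
  refine (hφ.abs_sub_le_dist (x, r) 0).trans ?_
  rw [dist_zero_right, Prod.norm_mk, Real.norm_eq_abs]
  exact max_le (by linarith [abs_nonneg r]) (by linarith)

lemma abs_apply_le (hφ : LipschitzWith 1 φ) (x : 𝕋) (r : ℝ) :
    |φ (x, r)| ≤ |φ 0| + (1 / 2 + |r|) := by
  linarith [abs_sub_abs_le_abs_sub (φ (x, r)) (φ 0), hφ.abs_sub_apply_zero_le x r]

end LipschitzWith

section Integrals

variable {α β : Type*} [MeasurableSpace α] [MeasurableSpace β]

lemma integral_mul_sub_integral_mul_eq {ν : Measure α} {ρ₁ ρ₂ ψ₁ ψ₂ : α → ℝ} {K : ℝ} (c : ℝ)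
    (hρ₁ : Integrable ρ₁ ν) (hρ₂ : Integrable ρ₂ ν)
    (hψ₁ : AEStronglyMeasurable ψ₁ ν) (hψ₂ : AEStronglyMeasurable ψ₂ ν)
    (hψ₁K : ∀ a, ‖ψ₁ a‖ ≤ K) (hψ₂K : ∀ a, ‖ψ₂ a‖ ≤ K) (hmass : ∫ a, ρ₁ a ∂ν = ∫ a, ρ₂ a ∂ν) :
    ∫ a, ρ₁ a * ψ₁ a ∂ν - ∫ a, ρ₂ a * ψ₂ a ∂ν
      = ∫ a, ρ₁ a * (ψ₁ a - ψ₂ a) ∂ν + ∫ a, (ρ₁ a - ρ₂ a) * (ψ₂ a - c) ∂ν := by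
  have h₁₁ := hρ₁.mul_bdd hψ₁ (ae_of_all _ hψ₁K)
  have h₁₂ := hρ₁.mul_bdd hψ₂ (ae_of_all _ hψ₂K)
  have h₂₂ := hρ₂.mul_bdd hψ₂ (ae_of_all _ hψ₂K)
  have hvel : ∫ a, ρ₁ a * (ψ₁ a - ψ₂ a) ∂ν = ∫ a, ρ₁ a * ψ₁ a ∂ν - ∫ a, ρ₁ a * ψ₂ a ∂ν := by
    rw [← integral_sub h₁₁ h₁₂]
    simp only [mul_sub]
  have hden : ∫ a, (ρ₁ a - ρ₂ a) * (ψ₂ a - c) ∂ν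
      = (∫ a, ρ₁ a * ψ₂ a ∂ν - ∫ a, ρ₂ a * ψ₂ a ∂ν) - c * (∫ a, ρ₁ a ∂ν - ∫ a, ρ₂ a ∂ν) := by
    rw [← integral_sub h₁₂ h₂₂, ← integral_sub hρ₁ hρ₂, ← integral_const_mul,
      ← integral_sub (f := fun a => ρ₁ a * ψ₂ a - ρ₂ a * ψ₂ a)
        (g := fun a => c * (ρ₁ a - ρ₂ a)) (h₁₂.sub h₂₂)
        ((hρ₁.sub hρ₂).const_mul c)]
    congr 1 with a
    ring
  rw [hvel, hden, hmass]
  ring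

lemma integral_prod_le_integral_of_abs_le {μ : Measure α} {ν : Measure β} [SFinite μ]
    [IsProbabilityMeasure ν] {f : α × β → ℝ} {g : α → ℝ} (hg : Integrable g μ)
    (hfg : ∀ a b, |f (a, b)| ≤ g a) :
    ∫ z, f z ∂μ.prod ν ≤ ∫ a, g a ∂μ := by
  obtain ⟨b⟩ := nonempty_of_isProbabilityMeasure ν
  by_cases hf : Integrable f (μ.prod ν)
  · calc ∫ z, f z ∂μ.prod ν ≤ ∫ z, g z.1 ∂μ.prod ν :=
          integral_mono hf (hg.comp_fst ν) fun z => (le_abs_self _).trans (hfg z.1 z.2)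
      _ = ∫ a, g a ∂μ := by rw [integral_fun_fst, probReal_univ, one_smul]
  · rw [integral_undef hf]
    exact integral_nonneg fun a => (abs_nonneg _).trans (hfg a b)

end Integrals

section Fibered

variable {M : Type*} [MeasurableSpace M] (μ : Measure M)

lemma integral_fiberedMeasure {ρ v : M → 𝕋 → ℝ}
    (hρ : Measurable (fun q : M × 𝕋 => ρ q.1 q.2)) (hv : Measurable (fun q : M × 𝕋 => v q.1 q.2))
    (hρ₀ : ∀ θ x, 0 ≤ ρ θ x) {φ : 𝕋 × ℝ → ℝ} (hφ : Continuous φ) :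
    ∫ p, φ p ∂(fiberedMeasure μ ρ v)
      = ∫ q, ρ q.1 q.2 * φ (q.2, v q.1 q.2) ∂(μ.prod (volume : Measure 𝕋)) := by
  rw [fiberedMeasure, integral_map (measurable_snd.prodMk hv).aemeasurable
      hφ.aestronglyMeasurable,
    integral_withDensity_eq_integral_toReal_smul hρ.ennreal_ofReal
      (ae_of_all _ fun _ => ENNReal.ofReal_lt_top)]
  simp only [ENNReal.toReal_ofReal (hρ₀ _ _), smul_eq_mul]

variable [IsFiniteMeasure μ] {ρ₁ ρ₂ v₁ v₂ : M → 𝕋 → ℝ}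

lemma integral_fiberedMeasure_sub_le
    (hρ₁ : Measurable (fun q : M × 𝕋 => ρ₁ q.1 q.2))
    (hρ₂ : Measurable (fun q : M × 𝕋 => ρ₂ q.1 q.2))
    (hv₁ : Measurable (fun q : M × 𝕋 => v₁ q.1 q.2))
    (hv₂ : Measurable (fun q : M × 𝕋 => v₂ q.1 q.2))
    (hρ₀ : ∀ θ x, 0 ≤ ρ₁ θ x ∧ 0 ≤ ρ₂ θ x) {B : ℝ}
    (hB : ∀ θ x, |ρ₁ θ x| ≤ B ∧ |ρ₂ θ x| ≤ B ∧ |v₁ θ x| ≤ B ∧ |v₂ θ x| ≤ B)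
    (hmass : (∫ θ, ∫ x : 𝕋, ρ₁ θ x ∂(volume : Measure 𝕋) ∂μ)
      = ∫ θ, ∫ x : 𝕋, ρ₂ θ x ∂(volume : Measure 𝕋) ∂μ)
    (hint_v : Integrable (fun θ => ⨆ x : 𝕋, |v₁ θ x - v₂ θ x|) μ)
    (hint_ρ : Integrable (fun θ => ⨆ x : 𝕋, |ρ₁ θ x - ρ₂ θ x|) μ)
    {φ : 𝕋 × ℝ → ℝ} (hφ : LipschitzWith 1 φ) :
    ∫ p, φ p ∂(fiberedMeasure μ ρ₁ v₁) - ∫ p, φ p ∂(fiberedMeasure μ ρ₂ v₂)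
      ≤ (⨆ θ : M, ⨆ x : 𝕋, |ρ₁ θ x|) * (∫ θ, (⨆ x : 𝕋, |v₁ θ x - v₂ θ x|) ∂μ)
        + (1/2 + ⨆ θ : M, ⨆ x : 𝕋, |v₂ θ x|)
          * ∫ θ, (⨆ x : 𝕋, |ρ₁ θ x - ρ₂ θ x|) ∂μ := by
  set A := ⨆ θ : M, ⨆ x : 𝕋, |ρ₁ θ x|
  set C := ⨆ θ : M, ⨆ x : 𝕋, |v₂ θ x|
  have hA : ∀ θ x, |ρ₁ θ x| ≤ A := le_ciSup_ciSup_of_forall_le fun θ x => (hB θ x).1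
  have hC : ∀ θ x, |v₂ θ x| ≤ C := le_ciSup_ciSup_of_forall_le fun θ x => (hB θ x).2.2.2
  have hdv : ∀ θ x, |v₁ θ x - v₂ θ x| ≤ ⨆ x, |v₁ θ x - v₂ θ x| := fun θ =>
    le_ciSup_of_forall_le fun x => (abs_sub _ _).trans (add_le_add (hB θ x).2.2.1 (hB θ x).2.2.2)
  have hdρ : ∀ θ x, |ρ₁ θ x - ρ₂ θ x| ≤ ⨆ x, |ρ₁ θ x - ρ₂ θ x| := fun θ =>
    le_ciSup_of_forall_le fun x => (abs_sub _ _).trans (add_le_add (hB θ x).1 (hB θ x).2.1)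
  have hψ (v : M → 𝕋 → ℝ) (hv : Measurable (fun q : M × 𝕋 => v q.1 q.2))
      (hvB : ∀ θ x, |v θ x| ≤ B) :
      AEStronglyMeasurable (fun q : M × 𝕋 => φ (q.2, v q.1 q.2)) (μ.prod volume) ∧
        ∀ q : M × 𝕋, ‖φ (q.2, v q.1 q.2)‖ ≤ |φ 0| + (1 / 2 + B) :=
    ⟨(hφ.continuous.measurable.comp (measurable_snd.prodMk hv)).aestronglyMeasurable,
      fun q => (hφ.abs_apply_le _ _).trans (by linarith [hvB q.1 q.2])⟩
  have hρ (ρ : M → 𝕋 → ℝ) (hρ : Measurable (fun q : M × 𝕋 => ρ q.1 q.2))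
      (hρB : ∀ θ x, |ρ θ x| ≤ B) : Integrable (fun q : M × 𝕋 => ρ q.1 q.2) (μ.prod volume) :=
    .of_bound hρ.aestronglyMeasurable B (ae_of_all _ fun q => hρB q.1 q.2)
  obtain ⟨hψ₁, hψ₁B⟩ := hψ v₁ hv₁ fun θ x => (hB θ x).2.2.1
  obtain ⟨hψ₂, hψ₂B⟩ := hψ v₂ hv₂ fun θ x => (hB θ x).2.2.2
  have hi₁ := hρ ρ₁ hρ₁ fun θ x => (hB θ x).1
  have hi₂ := hρ ρ₂ hρ₂ fun θ x => (hB θ x).2.1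
  rw [integral_fiberedMeasure μ hρ₁ hv₁ (fun θ x => (hρ₀ θ x).1) hφ.continuous,
    integral_fiberedMeasure μ hρ₂ hv₂ (fun θ x => (hρ₀ θ x).2) hφ.continuous,
    integral_mul_sub_integral_mul_eq (φ 0) hi₁ hi₂ hψ₁ hψ₂ hψ₁B hψ₂B
      (by rwa [integral_prod _ hi₁, integral_prod _ hi₂]),
    ← integral_const_mul, ← integral_const_mul]
  refine add_le_add (integral_prod_le_integral_of_abs_le (hint_v.const_mul _) fun θ x => ?_)
    (integral_prod_le_integral_of_abs_le (hint_ρ.const_mul _) fun θ x => ?_)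
  · exact abs_mul_le_mul_of_abs_le (hA θ x) ((hφ.abs_sub_apply_mk_le x _ _).trans (hdv θ x))
  · rw [mul_comm (1 / 2 + C)]
    exact abs_mul_le_mul_of_abs_le (hdρ θ x)
      ((hφ.abs_sub_apply_zero_le x _).trans (by linarith [hC θ x]))

end Fibered

/-- Quantitative W₁ estimate between two superpositions of Dirac masses in velocity:
W₁(g₁, g₂) ≤ (sup_θ ‖ρ₁^θ‖_∞) ∫_M ‖v₁^θ − v₂^θ‖_∞ dμ(θ)
            + (1/2 + sup_θ ‖v₂^θ‖_∞) ∫_M ‖ρ₁^θ − ρ₂^θ‖_∞ dμ(θ). -/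
theorem W1_fibered_estimate
    {M : Type*} [MeasurableSpace M] (μ : Measure M) [IsFiniteMeasure μ]
    (ρ₁ ρ₂ v₁ v₂ : M → 𝕋 → ℝ)
    (hmeas : Measurable (fun q : M × 𝕋 => ρ₁ q.1 q.2) ∧
      Measurable (fun q : M × 𝕋 => ρ₂ q.1 q.2) ∧
      Measurable (fun q : M × 𝕋 => v₁ q.1 q.2) ∧
      Measurable (fun q : M × 𝕋 => v₂ q.1 q.2))
    (hnonneg : ∀ θ x, 0 ≤ ρ₁ θ x ∧ 0 ≤ ρ₂ θ x)
    (hbdd : ∃ B : ℝ, ∀ θ x,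
      ρ₁ θ x ≤ B ∧ ρ₂ θ x ≤ B ∧ |v₁ θ x| ≤ B ∧ |v₂ θ x| ≤ B)
    (hmass : (∫ θ, ∫ x : 𝕋, ρ₁ θ x ∂(volume : Measure 𝕋) ∂μ)
      = ∫ θ, ∫ x : 𝕋, ρ₂ θ x ∂(volume : Measure 𝕋) ∂μ)
    (hint_v : Integrable (fun θ => ⨆ x : 𝕋, |v₁ θ x - v₂ θ x|) μ)
    (hint_ρ : Integrable (fun θ => ⨆ x : 𝕋, |ρ₁ θ x - ρ₂ θ x|) μ) :
    W1 (fiberedMeasure μ ρ₁ v₁) (fiberedMeasure μ ρ₂ v₂)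
      ≤ (⨆ θ : M, ⨆ x : 𝕋, |ρ₁ θ x|) * (∫ θ, (⨆ x : 𝕋, |v₁ θ x - v₂ θ x|) ∂μ)
        + (1/2 + ⨆ θ : M, ⨆ x : 𝕋, |v₂ θ x|)
          * ∫ θ, (⨆ x : 𝕋, |ρ₁ θ x - ρ₂ θ x|) ∂μ := by
  obtain ⟨hρ₁, hρ₂, hv₁, hv₂⟩ := hmeas
  obtain ⟨B, hB⟩ := hbdd
  have hB' : ∀ θ x, |ρ₁ θ x| ≤ B ∧ |ρ₂ θ x| ≤ B ∧ |v₁ θ x| ≤ B ∧ |v₂ θ x| ≤ B := fun θ x => by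
    rw [abs_of_nonneg (hnonneg θ x).1, abs_of_nonneg (hnonneg θ x).2]
    exact hB θ x
  have hsup₀ (f : M → 𝕋 → ℝ) (θ : M) : 0 ≤ ⨆ x, |f θ x| :=
    Real.iSup_nonneg fun x => abs_nonneg _
  refine Real.sSup_le ?_ (add_nonneg
    (mul_nonneg (Real.iSup_nonneg (hsup₀ ρ₁)) (integral_nonneg (hsup₀ (v₁ - v₂))))
    (mul_nonneg (by linarith [Real.iSup_nonneg (hsup₀ v₂)]) (integral_nonneg (hsup₀ (ρ₁ - ρ₂)))))
  rintro r ⟨φ, hφ, rfl⟩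
  exact integral_fiberedMeasure_sub_le μ hρ₁ hρ₂ hv₁ hv₂ hnonneg hB' hmass hint_v hint_ρ hφ
end
end

section
/- Let ε ∈ (0,1]. For i = 1, 2 let Ū_i : ℝ → ℝ be 1-periodic continuous functions with ‖Ū_i‖_{∞} ≤ 1, and let Û_i : ℝ → ℝ be 1-periodic C² functions with ‖Û_i‖_{∞} ≤ 4 satisfying Û_i'' = e^{(Ū_i + Û_i)/ε²} − 1 on ℝ. Then ∫₀¹ (Û_1'(x) − Û_2'(x))² dx ≤ ε⁻⁴ e^{15/ε²} ∫₀¹ (Ū_1(x) − Ū_2(x))² dx. -/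
open MeasureTheory Real Filter Topology

/-!
Put `w = Û₁ - Û₂` and `sᵢ = (Ūᵢ + Ûᵢ) / ε²`, so that `w'' = e^{s₁} - e^{s₂}` and
`ε² (s₁ - s₂) = (Ū₁ - Ū₂) + w`. Integrating by parts over a period, `∫ w'² = -∫ w w''`.
Since `exp` is increasing and `e^{5/ε²}`-Lipschitz on `s ≤ 5/ε²`, writing `D = e^{s₁} - e^{s₂}`
and `d = s₁ - s₂` we have `D d ≥ 0` and `|D| ≤ e^{5/ε²} |d|`, so completing the square in
`-w w'' = D (Ū₁ - Ū₂ - ε² d)` bounds it pointwise by `e^{5/ε²} / (4ε²) · (Ū₁ - Ū₂)²`,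
and `e^{5/ε²} / (4ε²) ≤ ε⁻⁴ e^{15/ε²}` for `ε ≤ 1`.
-/

theorem Function.Periodic.deriv {𝕜 F : Type*} [NontriviallyNormedField 𝕜] [NormedAddCommGroup F]
    [NormedSpace 𝕜 F] {f : 𝕜 → F} {T : 𝕜} (hf : Function.Periodic f T) :
    Function.Periodic (deriv f) T := fun x => by
  rw [← deriv_comp_add_const, show (fun y => f (y + T)) = f from funext hf]

theorem integral_deriv_sq_eq_neg_integral_mul_deriv_deriv {f : ℝ → ℝ} {T : ℝ}
    (hf : ContDiff ℝ 2 f) (hper : Function.Periodic f T) :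
    ∫ x in 0..T, deriv f x ^ 2 = -∫ x in 0..T, f x * deriv (deriv f) x := by
  have hf' : ContDiff ℝ 1 (deriv f) := hf.deriv'
  have hibp := intervalIntegral.integral_mul_deriv_eq_deriv_mul
    (fun x _ => (hf.differentiable two_ne_zero x).hasDerivAt)
    (fun x _ => (hf'.differentiable one_ne_zero x).hasDerivAt)
    (hf'.continuous.intervalIntegrable 0 T) ((hf'.continuous_deriv le_rfl).intervalIntegrable 0 T)
  have hfT : f T = f 0 := by simpa using hper 0
  have hf'T : deriv f T = deriv f 0 := by simpa using hper.deriv 0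
  rw [hfT, hf'T, sub_self, zero_sub] at hibp
  simp only [hibp, neg_neg, sq]

theorem integral_deriv_sub_sq_le_of_forall_le {f g h : ℝ → ℝ} {T M : ℝ} (hT : 0 ≤ T)
    (hf : ContDiff ℝ 2 f) (hg : ContDiff ℝ 2 g)
    (hfT : Function.Periodic f T) (hgT : Function.Periodic g T)
    (hh : IntervalIntegrable h volume 0 T)
    (hle : ∀ x ∈ Set.Icc 0 T, -((f x - g x) * (deriv (deriv f) x - deriv (deriv g) x)) ≤ M * h x) :
    ∫ x in 0..T, (deriv f x - deriv g x) ^ 2 ≤ M * ∫ x in 0..T, h x := by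
  have hderiv : deriv (fun x => f x - g x) = fun x => deriv f x - deriv g x :=
    funext fun x => deriv_sub (hf.differentiable two_ne_zero x) (hg.differentiable two_ne_zero x)
  have hderiv2 : deriv (fun x => deriv f x - deriv g x) =
      fun x => deriv (deriv f) x - deriv (deriv g) x :=
    funext fun x => deriv_sub (hf.deriv'.differentiable one_ne_zero x)
      (hg.deriv'.differentiable one_ne_zero x)
  have hibp := integral_deriv_sq_eq_neg_integral_mul_deriv_deriv (hf.sub hg) (hfT.sub hgT)
  rw [hderiv, hderiv2, ← intervalIntegral.integral_neg] at hibp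
  have hcont : Continuous fun x => -((f x - g x) * (deriv (deriv f) x - deriv (deriv g) x)) :=
    ((hf.continuous.sub hg.continuous).mul
      ((hf.deriv'.continuous_deriv le_rfl).sub (hg.deriv'.continuous_deriv le_rfl))).neg
  rw [hibp, ← intervalIntegral.integral_const_mul]
  exact intervalIntegral.integral_mono_on hT (hcont.intervalIntegrable 0 T) (hh.const_mul M) hle

theorem Real.exp_sub_exp_mul_sub_nonneg (s t : ℝ) : 0 ≤ (exp s - exp t) * (s - t) := by
  rcases le_total t s with h | h
  · exact mul_nonneg (sub_nonneg.2 (exp_le_exp.2 h)) (sub_nonneg.2 h)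
  · exact mul_nonneg_of_nonpos_of_nonpos (sub_nonpos.2 (exp_le_exp.2 h)) (sub_nonpos.2 h)

theorem Real.abs_exp_sub_exp_le {s t B : ℝ} (hs : s ≤ B) (ht : t ≤ B) :
    |exp s - exp t| ≤ exp B * |s - t| := by
  wlog h : t ≤ s generalizing s t
  · rw [abs_sub_comm, abs_sub_comm s]
    exact this ht hs (le_of_not_ge h)
  have hst : exp s - exp t ≤ exp s * (s - t) := by
    have hsplit : exp t = exp s * exp (t - s) := by rw [← exp_add]; ring_nf
    nlinarith [add_one_le_exp (t - s), exp_pos s]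
  rw [abs_of_nonneg (sub_nonneg.2 (exp_le_exp.2 h)), abs_of_nonneg (sub_nonneg.2 h)]
  exact hst.trans (mul_le_mul_of_nonneg_right (exp_le_exp.2 hs) (sub_nonneg.2 h))

theorem mul_sub_le_of_mul_nonneg_of_abs_le {D d v c L : ℝ} (hc : 0 < c) (hL : 0 < L)
    (hDd : 0 ≤ D * d) (hD : |D| ≤ L * |d|) : D * (v - c * d) ≤ L / (4 * c) * v ^ 2 := by
  have hD2 : |D| ^ 2 ≤ L * (D * d) :=
    calc |D| ^ 2 = |D| * |D| := sq _
      _ ≤ L * |d| * |D| := mul_le_mul_of_nonneg_right hD (abs_nonneg D)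
      _ = L * (D * d) := by rw [← abs_of_nonneg hDd, abs_mul]; ring
  have hDv : D * v ≤ |D| * |v| := (le_abs_self _).trans_eq (abs_mul D v)
  rw [div_mul_eq_mul_div, le_div_iff₀ (by positivity)]
  refine le_of_mul_le_mul_left ?_ hL
  -- completing the square in `|D|`, using `D * d = |D| * |d| ≥ |D| ^ 2 / L`
  linear_combination mul_le_mul_of_nonneg_left hDv (by positivity : (0 : ℝ) ≤ 4 * c * L) +
    mul_le_mul_of_nonneg_left hD2 (by positivity : (0 : ℝ) ≤ 4 * c * c) +
    sq_nonneg (L * |v| - 2 * c * |D|) + L ^ 2 * sq_abs v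

theorem Real.exp_div_sub_exp_div_mul_le {a b v c K : ℝ} (hc : 0 < c) (ha : a ≤ K) (hb : b ≤ K) :
    (exp (a / c) - exp (b / c)) * (v - (a - b)) ≤ exp (K / c) / (4 * c) * v ^ 2 := by
  have hab : a - b = c * (a / c - b / c) := by field_simp
  rw [hab]
  exact mul_sub_le_of_mul_nonneg_of_abs_le hc (exp_pos _) (exp_sub_exp_mul_sub_nonneg _ _)
    (abs_exp_sub_exp_le (div_le_div_of_nonneg_right ha hc.le)
      (div_le_div_of_nonneg_right hb hc.le))

theorem hatU_L2_stability_general (ε : ℝ) (hε : ε ∈ Set.Ioc (0:ℝ) 1)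
    (Ub₁ Ub₂ Uh₁ Uh₂ : ℝ → ℝ)
    (hperh₁ : Function.Periodic Uh₁ 1) (hperh₂ : Function.Periodic Uh₂ 1)
    (hcont₁ : Continuous Ub₁) (hcont₂ : Continuous Ub₂)
    (hb₁ : ∀ x, |Ub₁ x| ≤ 1) (hb₂ : ∀ x, |Ub₂ x| ≤ 1)
    (hC2₁ : ContDiff ℝ 2 Uh₁) (hC2₂ : ContDiff ℝ 2 Uh₂)
    (hhb₁ : ∀ x, |Uh₁ x| ≤ 4) (hhb₂ : ∀ x, |Uh₂ x| ≤ 4)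
    (heq₁ : ∀ x, deriv (deriv Uh₁) x = Real.exp ((Ub₁ x + Uh₁ x)/ε^2) - 1)
    (heq₂ : ∀ x, deriv (deriv Uh₂) x = Real.exp ((Ub₂ x + Uh₂ x)/ε^2) - 1) :
    (∫ x in (0:ℝ)..1, (deriv Uh₁ x - deriv Uh₂ x)^2)
      ≤ (1/ε^4) * Real.exp (15/ε^2) * ∫ x in (0:ℝ)..1, (Ub₁ x - Ub₂ x)^2 := by
  obtain ⟨hε0, hε1⟩ := hε
  have hc : 0 < ε ^ 2 := by positivity
  have hpt : ∀ x ∈ Set.Icc (0:ℝ) 1,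
      -((Uh₁ x - Uh₂ x) * (deriv (deriv Uh₁) x - deriv (deriv Uh₂) x))
        ≤ exp (5 / ε ^ 2) / (4 * ε ^ 2) * (Ub₁ x - Ub₂ x) ^ 2 := by
    intro x _
    have h := Real.exp_div_sub_exp_div_mul_le (v := Ub₁ x - Ub₂ x) hc
      (by linarith [(abs_le.1 (hb₁ x)).2, (abs_le.1 (hhb₁ x)).2] : Ub₁ x + Uh₁ x ≤ 5)
      (by linarith [(abs_le.1 (hb₂ x)).2, (abs_le.1 (hhb₂ x)).2] : Ub₂ x + Uh₂ x ≤ 5)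
    rw [heq₁, heq₂]
    linarith
  have hconst : exp (5 / ε ^ 2) / (4 * ε ^ 2) ≤ 1 / ε ^ 4 * exp (15 / ε ^ 2) :=
    calc exp (5 / ε ^ 2) / (4 * ε ^ 2) = 1 / (4 * ε ^ 2) * exp (5 / ε ^ 2) := by ring
      _ ≤ 1 / ε ^ 4 * exp (15 / ε ^ 2) := by
        gcongr
        · nlinarith [pow_le_one₀ hε0.le hε1 (n := 2)]
        · norm_num
  refine (integral_deriv_sub_sq_le_of_forall_le zero_le_one hC2₁ hC2₂ hperh₁ hperh₂
    (((hcont₁.sub hcont₂).pow 2).intervalIntegrable 0 1) hpt).trans ?_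
  exact mul_le_mul_of_nonneg_right hconst
    (intervalIntegral.integral_nonneg zero_le_one fun x _ => sq_nonneg _)

/-- L² stability estimate for the regular part of the electric field:
if Û_i'' = e^{(Ū_i+Û_i)/ε²} − 1 (i = 1,2) with ‖Ū_i‖_∞ ≤ 1 and ‖Û_i‖_∞ ≤ 4, then
∫₀¹ (Û₁' − Û₂')² ≤ ε⁻⁴ e^{15/ε²} ∫₀¹ (Ū₁ − Ū₂)². -/
theorem hatU_L2_stability (ε : ℝ) (hε : ε ∈ Set.Ioc (0:ℝ) 1)
    (Ub₁ Ub₂ Uh₁ Uh₂ : ℝ → ℝ)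
    (hper₁ : Function.Periodic Ub₁ 1) (hper₂ : Function.Periodic Ub₂ 1)
    (hperh₁ : Function.Periodic Uh₁ 1) (hperh₂ : Function.Periodic Uh₂ 1)
    (hcont₁ : Continuous Ub₁) (hcont₂ : Continuous Ub₂)
    (hb₁ : ∀ x, |Ub₁ x| ≤ 1) (hb₂ : ∀ x, |Ub₂ x| ≤ 1)
    (hC2₁ : ContDiff ℝ 2 Uh₁) (hC2₂ : ContDiff ℝ 2 Uh₂)
    (hhb₁ : ∀ x, |Uh₁ x| ≤ 4) (hhb₂ : ∀ x, |Uh₂ x| ≤ 4)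
    (heq₁ : ∀ x, deriv (deriv Uh₁) x = Real.exp ((Ub₁ x + Uh₁ x)/ε^2) - 1)
    (heq₂ : ∀ x, deriv (deriv Uh₂) x = Real.exp ((Ub₂ x + Uh₂ x)/ε^2) - 1) :
    (∫ x in (0:ℝ)..1, (deriv Uh₁ x - deriv Uh₂ x)^2)
      ≤ (1/ε^4) * Real.exp (15/ε^2) * ∫ x in (0:ℝ)..1, (Ub₁ x - Ub₂ x)^2 :=
  hatU_L2_stability_general ε hε Ub₁ Ub₂ Uh₁ Uh₂ hperh₁ hperh₂ hcont₁ hcont₂ hb₁ hb₂ hC2₁ hC2₂ hhb₁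
    hhb₂ heq₁ heq₂
end

section
/- For all real numbers x > 0 and y > 0: (√y − √x)² ≤ x log(x/y) − x + y. -/
open Real

/-- Classical inequality: for all x, y > 0, (√y − √x)² ≤ x log(x/y) − x + y. -/
theorem sq_sqrt_sub_le_log_ineq (x y : ℝ) (hx : 0 < x) (hy : 0 < y) :
    (Real.sqrt y - Real.sqrt x)^2 ≤ x * Real.log (x / y) - x + y := by
  have hsx : 0 < Real.sqrt x := Real.sqrt_pos.mpr hx
  have hsy : 0 < Real.sqrt y := Real.sqrt_pos.mpr hy
  have hx2 : Real.sqrt x ^ 2 = x := Real.sq_sqrt hx.le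
  have hy2 : Real.sqrt y ^ 2 = y := Real.sq_sqrt hy.le
  have ht : (0:ℝ) < Real.sqrt y / Real.sqrt x := by positivity
  have h1 : Real.log (Real.sqrt y / Real.sqrt x) ≤ Real.sqrt y / Real.sqrt x - 1 :=
    Real.log_le_sub_one_of_pos ht
  have h2 : Real.log (Real.sqrt y / Real.sqrt x) = (Real.log y - Real.log x) / 2 := by
    rw [Real.log_div hsy.ne' hsx.ne', Real.log_sqrt hy.le, Real.log_sqrt hx.le]
    ring
  have h3 : Real.log (x / y) = Real.log x - Real.log y := Real.log_div hx.ne' hy.ne'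
  rw [h2] at h1
  have h4 : (Real.log y - Real.log x) / 2 * (2 * Real.sqrt x ^ 2)
      ≤ (Real.sqrt y / Real.sqrt x - 1) * (2 * Real.sqrt x ^ 2) := by
    apply mul_le_mul_of_nonneg_right h1; positivity
  have h5 : (Real.sqrt y / Real.sqrt x) * Real.sqrt x ^ 2 = Real.sqrt y * Real.sqrt x := by
    field_simp
  nlinarith [h4, h5, hx2, hy2]
end
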